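/- arXiv:2409.06517 — 7 statements merged into one kernel-verified Lean document; each statement's English description precedes it below -/
import Mathlib

section
/- Let μ : ℝ² → ℝ be twice continuously differentiable and φ : ℝ² → ℝ be four times continuously differentiable, and set u = ∇⊥φ = (−∂₂φ, ∂₁φ). Then at every point of ℝ² the curl of the divergence of the viscous stress tensor equals L_μφ: ∂₁(∂₁(μ(Su)₁₂) + ∂₂(μ(Su)₂₂)) − ∂₂(∂₁(μ(Su)₁₁) + ∂₂(μ(Su)₂₁)) = (∂₂₂−∂₁₁)(μ(∂₂₂−∂₁₁)φ) + 2∂₁₂(μ·(2∂₁₂φ)). -/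
/-- Partial derivative in the first coordinate direction on `ℝ²`. -/
noncomputable def pd1 (f : ℝ × ℝ → ℝ) : ℝ × ℝ → ℝ := fun x => fderiv ℝ f x (1, 0)

/-- Partial derivative in the second coordinate direction on `ℝ²`. -/
noncomputable def pd2 (f : ℝ × ℝ → ℝ) : ℝ × ℝ → ℝ := fun x => fderiv ℝ f x (0, 1)

lemma pd1_neg (f : ℝ × ℝ → ℝ) (x : ℝ × ℝ) : pd1 (fun y => -(f y)) x = -(pd1 f x) := by
  unfold pd1; rw [fderiv_fun_neg]; simp

lemma pd2_neg (f : ℝ × ℝ → ℝ) (x : ℝ × ℝ) : pd2 (fun y => -(f y)) x = -(pd2 f x) := by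
  unfold pd2; rw [fderiv_fun_neg]; simp

lemma pd1_add {f g : ℝ × ℝ → ℝ} {x : ℝ × ℝ} (hf : DifferentiableAt ℝ f x)
    (hg : DifferentiableAt ℝ g x) : pd1 (fun y => f y + g y) x = pd1 f x + pd1 g x := by
  unfold pd1; rw [fderiv_fun_add hf hg]; simp

lemma pd2_add {f g : ℝ × ℝ → ℝ} {x : ℝ × ℝ} (hf : DifferentiableAt ℝ f x)
    (hg : DifferentiableAt ℝ g x) : pd2 (fun y => f y + g y) x = pd2 f x + pd2 g x := by
  unfold pd2; rw [fderiv_fun_add hf hg]; simp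

lemma pd1_contDiff {f : ℝ × ℝ → ℝ} {m n : WithTop ℕ∞} (hf : ContDiff ℝ n f) (h : m + 1 ≤ n) :
    ContDiff ℝ m (pd1 f) := by
  unfold pd1; exact (hf.fderiv_right h).clm_apply contDiff_const

lemma pd2_contDiff {f : ℝ × ℝ → ℝ} {m n : WithTop ℕ∞} (hf : ContDiff ℝ n f) (h : m + 1 ≤ n) :
    ContDiff ℝ m (pd2 f) := by
  unfold pd2; exact (hf.fderiv_right h).clm_apply contDiff_const

lemma pd_symm {f : ℝ × ℝ → ℝ} (hf : ContDiff ℝ 2 f) (x : ℝ × ℝ) :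
    pd1 (pd2 f) x = pd2 (pd1 f) x := by
  have hd : DifferentiableAt ℝ (fderiv ℝ f) x :=
    ((hf.fderiv_right (m := 1) (by norm_num)).differentiable one_ne_zero).differentiableAt
  have h1 : pd1 (pd2 f) x = fderiv ℝ (fderiv ℝ f) x (1, 0) (0, 1) := by
    unfold pd1 pd2
    rw [fderiv_clm_apply hd (differentiableAt_const _)]
    simp
  have h2 : pd2 (pd1 f) x = fderiv ℝ (fderiv ℝ f) x (0, 1) (1, 0) := by
    unfold pd1 pd2
    rw [fderiv_clm_apply hd (differentiableAt_const _)]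
    simp
  rw [h1, h2]
  exact (hf.contDiffAt.isSymmSndFDerivAt (by simp)).eq _ _

/-- The curl of the divergence of the viscous stress tensor `μ Su`, for `u = ∇⊥φ`,
equals `L_μ φ = (∂₂₂−∂₁₁)(μ(∂₂₂−∂₁₁)φ) + 2∂₁₂(μ·(2∂₁₂φ))`. -/
theorem curl_div_viscous_stress_eq_Lmu
    (μ φ : ℝ × ℝ → ℝ) (hμ : ContDiff ℝ 2 μ) (hφ : ContDiff ℝ 4 φ)
    (u1 u2 : ℝ × ℝ → ℝ)
    (hu1 : u1 = fun x => -(pd2 φ x)) (hu2 : u2 = pd1 φ)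
    (S11 S12 S21 S22 : ℝ × ℝ → ℝ)
    (hS11 : S11 = fun x => pd1 u1 x + pd1 u1 x)
    (hS12 : S12 = fun x => pd1 u2 x + pd2 u1 x)
    (hS21 : S21 = fun x => pd2 u1 x + pd1 u2 x)
    (hS22 : S22 = fun x => pd2 u2 x + pd2 u2 x) :
    ∀ x : ℝ × ℝ,
      pd1 (fun y => pd1 (fun z => μ z * S12 z) y + pd2 (fun z => μ z * S22 z) y) x
        - pd2 (fun y => pd1 (fun z => μ z * S11 z) y + pd2 (fun z => μ z * S21 z) y) x
      = (pd2 (pd2 (fun z => μ z * (pd2 (pd2 φ) z - pd1 (pd1 φ) z))) x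
          - pd1 (pd1 (fun z => μ z * (pd2 (pd2 φ) z - pd1 (pd1 φ) z))) x)
        + 2 * pd1 (pd2 (fun z => μ z * (2 * pd1 (pd2 φ) z))) x := by
  intro x
  subst hu1 hu2 hS11 hS12 hS21 hS22
  -- smoothness facts
  have h1φ : ContDiff ℝ 3 (pd1 φ) := pd1_contDiff hφ (by norm_num)
  have h2φ : ContDiff ℝ 3 (pd2 φ) := pd2_contDiff hφ (by norm_num)
  have h11 : ContDiff ℝ 2 (pd1 (pd1 φ)) := pd1_contDiff h1φ (by norm_num)
  have h22 : ContDiff ℝ 2 (pd2 (pd2 φ)) := pd2_contDiff h2φ (by norm_num)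
  have h12 : ContDiff ℝ 2 (pd1 (pd2 φ)) := pd1_contDiff h2φ (by norm_num)
  have hg : ContDiff ℝ 2 (fun z => μ z * (pd2 (pd2 φ) z - pd1 (pd1 φ) z)) :=
    hμ.mul (h22.sub h11)
  have hh : ContDiff ℝ 2 (fun z => μ z * (2 * pd1 (pd2 φ) z)) :=
    hμ.mul (contDiff_const.mul h12)
  set g : ℝ × ℝ → ℝ := fun z => μ z * (pd2 (pd2 φ) z - pd1 (pd1 φ) z) with hgdef
  set h : ℝ × ℝ → ℝ := fun z => μ z * (2 * pd1 (pd2 φ) z) with hhdef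
  -- rewrite the four stress entries
  have e12 : (fun z => μ z * ((fun x => pd1 (pd1 φ) x + pd2 (fun x => -(pd2 φ x)) x) z))
      = fun z => -(g z) := by
    funext z; simp only [hgdef, pd2_neg]; ring
  have e21 : (fun z => μ z * ((fun x => pd2 (fun x => -(pd2 φ x)) x + pd1 (pd1 φ) x) z))
      = fun z => -(g z) := by
    funext z; simp only [hgdef, pd2_neg]; ring
  have e11 : (fun z => μ z * ((fun x => pd1 (fun x => -(pd2 φ x)) x
        + pd1 (fun x => -(pd2 φ x)) x) z)) = fun z => -(h z) := by
    funext z; simp only [hhdef, pd1_neg]; ring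
  have e22 : (fun z => μ z * ((fun x => pd2 (pd1 φ) x + pd2 (pd1 φ) x) z)) = h := by
    funext z
    simp only [hhdef]
    rw [← pd_symm (hφ.of_le (by norm_num)) z]
    ring
  rw [e12, e21, e11, e22]
  have n1 : pd1 (fun z => -(g z)) = fun y => -(pd1 g y) := funext fun y => pd1_neg g y
  have n1h : pd1 (fun z => -(h z)) = fun y => -(pd1 h y) := funext fun y => pd1_neg h y
  have n2 : pd2 (fun z => -(g z)) = fun y => -(pd2 g y) := funext fun y => pd2_neg g y
  rw [n1, n1h, n2]
  have dg1 : Differentiable ℝ (pd1 g) := (pd1_contDiff (m := 1) hg (by norm_num)).differentiable one_ne_zero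
  have dg2 : Differentiable ℝ (pd2 g) := (pd2_contDiff (m := 1) hg (by norm_num)).differentiable one_ne_zero
  have dh1 : Differentiable ℝ (pd1 h) := (pd1_contDiff (m := 1) hh (by norm_num)).differentiable one_ne_zero
  have dh2 : Differentiable ℝ (pd2 h) := (pd2_contDiff (m := 1) hh (by norm_num)).differentiable one_ne_zero
  rw [pd1_add ((dg1 x).fun_neg) (dh2 x), pd2_add ((dh1 x).fun_neg) ((dg2 x).fun_neg),
    pd1_neg, pd2_neg, pd2_neg]
  have sym : pd1 (pd2 h) x = pd2 (pd1 h) x := pd_symm hh x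
  rw [← sym]
  ring
end

section
/- Let 0 < μ_* ≤ μ^* be real constants and let m ∈ [μ_*, μ^*]. For ξ = (ξ₁, ξ₂, ξ₃) ∈ ℝ³ define the quadratic form Q(ξ) = mξ₁² + mξ₃² − 2(m − μ_*/2)ξ₁ξ₃ + (4m − μ_*)ξ₂². Then (μ_*/2)(ξ₁² + ξ₂² + ξ₃²) ≤ Q(ξ) ≤ 4μ^*(ξ₁² + ξ₂² + ξ₃²) for all ξ ∈ ℝ³; that is, the coefficient tensor l^μ of the divergence-form reformulation of the operator L_μ with μ_* ≤ μ ≤ μ^* is uniformly elliptic. -/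
/-! Completing the square in `ξ₁, ξ₃` gives
`Q(ξ) = (m - μ⋆/2)(ξ₁ - ξ₃)² + (μ⋆/2)(ξ₁² + ξ₃²) + (4m - μ⋆)ξ₂²`, with nonnegative coefficients
once `μ⋆/2 ≤ m`. Dropping the first term gives the lower bound; `(ξ₁ - ξ₃)² ≤ 2(ξ₁² + ξ₃²)`
gives `Q(ξ) ≤ 4m|ξ|²`, hence the upper bound. -/

noncomputable def lmuForm (m μs : ℝ) (ξ : ℝ × ℝ × ℝ) : ℝ :=
  m * ξ.1 ^ 2 + m * ξ.2.2 ^ 2 - 2 * (m - μs / 2) * ξ.1 * ξ.2.2 + (4 * m - μs) * ξ.2.1 ^ 2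

section

variable {m μs : ℝ}

theorem lmuForm_eq (m μs : ℝ) (ξ : ℝ × ℝ × ℝ) :
    lmuForm m μs ξ = (m - μs / 2) * (ξ.1 - ξ.2.2) ^ 2 + μs / 2 * (ξ.1 ^ 2 + ξ.2.2 ^ 2)
      + (4 * m - μs) * ξ.2.1 ^ 2 := by
  unfold lmuForm
  ring

theorem half_mul_sq_le_lmuForm (hμs : 0 ≤ μs) (hm : μs / 2 ≤ m) (ξ : ℝ × ℝ × ℝ) :
    μs / 2 * (ξ.1 ^ 2 + ξ.2.1 ^ 2 + ξ.2.2 ^ 2) ≤ lmuForm m μs ξ := by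
  rw [lmuForm_eq]
  have hdiff : 0 ≤ (m - μs / 2) * (ξ.1 - ξ.2.2) ^ 2 := by
    have : 0 ≤ m - μs / 2 := by linarith
    positivity
  have hmid : μs / 2 * ξ.2.1 ^ 2 ≤ (4 * m - μs) * ξ.2.1 ^ 2 := by
    gcongr
    linarith
  linarith

theorem lmuForm_le_four_mul_sq (hμs : 0 ≤ μs) (hm : μs / 2 ≤ m) (ξ : ℝ × ℝ × ℝ) :
    lmuForm m μs ξ ≤ 4 * m * (ξ.1 ^ 2 + ξ.2.1 ^ 2 + ξ.2.2 ^ 2) := by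
  rw [lmuForm_eq]
  have hdiff : (m - μs / 2) * (ξ.1 - ξ.2.2) ^ 2 ≤ (m - μs / 2) * (2 * (ξ.1 ^ 2 + ξ.2.2 ^ 2)) :=
    mul_le_mul_of_nonneg_left (by nlinarith [sq_nonneg (ξ.1 + ξ.2.2)]) (by linarith)
  nlinarith [sq_nonneg ξ.1, sq_nonneg ξ.2.1, sq_nonneg ξ.2.2]

end

theorem ellipticity_of_Lmu_coefficients_general
    (μs μb m : ℝ) (hμs : 0 < μs) (hm : m ∈ Set.Icc μs μb)
    (Q : ℝ × ℝ × ℝ → ℝ)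
    (hQ : Q = fun ξ => m * ξ.1 ^ 2 + m * ξ.2.2 ^ 2
      - 2 * (m - μs / 2) * ξ.1 * ξ.2.2 + (4 * m - μs) * ξ.2.1 ^ 2) :
    ∀ ξ : ℝ × ℝ × ℝ,
      μs / 2 * (ξ.1 ^ 2 + ξ.2.1 ^ 2 + ξ.2.2 ^ 2) ≤ Q ξ ∧
      Q ξ ≤ 4 * μb * (ξ.1 ^ 2 + ξ.2.1 ^ 2 + ξ.2.2 ^ 2) := by
  obtain ⟨hm_lower, hm_upper⟩ := hm
  have hQ_eq : Q = lmuForm m μs := hQ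
  subst hQ_eq
  intro ξ
  have hμs' : 0 ≤ μs := hμs.le
  have hhalf : μs / 2 ≤ m := by linarith
  refine ⟨half_mul_sq_le_lmuForm hμs' hhalf ξ, (lmuForm_le_four_mul_sq hμs' hhalf ξ).trans ?_⟩
  gcongr

/-- Uniform ellipticity of the coefficient tensor of the divergence-form reformulation of
`L_μ`: for `μ⋆ ≤ m ≤ μ⁺`, the quadratic form
`Q(ξ) = mξ₁² + mξ₃² − 2(m − μ⋆/2)ξ₁ξ₃ + (4m − μ⋆)ξ₂²` satisfies
`(μ⋆/2)|ξ|² ≤ Q(ξ) ≤ 4μ⁺|ξ|²` for all `ξ ∈ ℝ³`. -/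
theorem ellipticity_of_Lmu_coefficients
    (μs μb m : ℝ) (hμs : 0 < μs) (hμsb : μs ≤ μb) (hm : m ∈ Set.Icc μs μb)
    (Q : ℝ × ℝ × ℝ → ℝ)
    (hQ : Q = fun ξ => m * ξ.1 ^ 2 + m * ξ.2.2 ^ 2
      - 2 * (m - μs / 2) * ξ.1 * ξ.2.2 + (4 * m - μs) * ξ.2.1 ^ 2) :
    ∀ ξ : ℝ × ℝ × ℝ,
      μs / 2 * (ξ.1 ^ 2 + ξ.2.1 ^ 2 + ξ.2.2 ^ 2) ≤ Q ξ ∧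
      Q ξ ≤ 4 * μb * (ξ.1 ^ 2 + ξ.2.1 ^ 2 + ξ.2.2 ^ 2) :=
  ellipticity_of_Lmu_coefficients_general μs μb m hμs hm Q hQ
end

section
/- Let μ : ℝ² → ℝ be twice continuously differentiable, φ : ℝ² → ℝ be four times continuously differentiable, and let τ̄ = (τ̄₁, τ̄₂) : ℝ² → ℝ² be a continuously differentiable unit vector field with n = (−τ̄₂, τ̄₁). Set ω₁ = μ(∂₂₂−∂₁₁)φ and ω₂ = 2μ∂₁₂φ. Then pointwise on ℝ²: L_μφ = −∂_{τ̄}*((τ̄₂²−τ̄₁²)∂_{τ̄}ω₁) − ∂_{τ̄}*(2τ̄₁τ̄₂∂_nω₁) − ∂_n*(2τ̄₁τ̄₂∂_{τ̄}ω₁) + ∂_n*((τ̄₂²−τ̄₁²)∂_nω₁) − ∂_{τ̄}*(2τ̄₁τ̄₂∂_{τ̄}ω₂) + ∂_{τ̄}*((τ̄₂²−τ̄₁²)∂_nω₂) + ∂_n*((τ̄₂²−τ̄₁²)∂_{τ̄}ω₂) + ∂_n*(2τ̄₁τ̄₂∂_nω₂). -/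
/-- Tangential derivative `∂_τ̄ f = τ̄₁∂₁f + τ̄₂∂₂f` along the unit field `τ̄ = (t1, t2)`. -/
noncomputable def dTau (t1 t2 f : ℝ × ℝ → ℝ) : ℝ × ℝ → ℝ :=
  fun x => t1 x * pd1 f x + t2 x * pd2 f x

/-- Normal derivative `∂_n f = n₁∂₁f + n₂∂₂f` with `n = (−τ̄₂, τ̄₁)`. -/
noncomputable def dN (t1 t2 f : ℝ × ℝ → ℝ) : ℝ × ℝ → ℝ :=
  fun x => -(t2 x) * pd1 f x + t1 x * pd2 f x

/-- Formal adjoint `∂_τ̄* g = −∂₁(τ̄₁g) − ∂₂(τ̄₂g)`. -/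
noncomputable def dTauStar (t1 t2 g : ℝ × ℝ → ℝ) : ℝ × ℝ → ℝ :=
  fun x => -(pd1 (fun y => t1 y * g y) x) - pd2 (fun y => t2 y * g y) x

/-- Formal adjoint `∂_n* g = −∂₁(n₁g) − ∂₂(n₂g)` with `n = (−τ̄₂, τ̄₁)`. -/
noncomputable def dNStar (t1 t2 g : ℝ × ℝ → ℝ) : ℝ × ℝ → ℝ :=
  fun x => -(pd1 (fun y => -(t2 y) * g y) x) - pd2 (fun y => t1 y * g y) x

lemma pdc1 {m n : WithTop ℕ∞} {f : ℝ × ℝ → ℝ} (hf : ContDiff ℝ n f) (h : m + 1 ≤ n) :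
    ContDiff ℝ m (pd1 f) := by
  unfold pd1; exact (hf.fderiv_right h).clm_apply contDiff_const

lemma pdc2 {m n : WithTop ℕ∞} {f : ℝ × ℝ → ℝ} (hf : ContDiff ℝ n f) (h : m + 1 ≤ n) :
    ContDiff ℝ m (pd2 f) := by
  unfold pd2; exact (hf.fderiv_right h).clm_apply contDiff_const

lemma combo8 {x : ℝ × ℝ} {f1 f2 f3 f4 f5 f6 f7 f8 g : ℝ × ℝ → ℝ}
    (h1 : DifferentiableAt ℝ f1 x) (h2 : DifferentiableAt ℝ f2 x)
    (h3 : DifferentiableAt ℝ f3 x) (h4 : DifferentiableAt ℝ f4 x)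
    (h5 : DifferentiableAt ℝ f5 x) (h6 : DifferentiableAt ℝ f6 x)
    (h7 : DifferentiableAt ℝ f7 x) (h8 : DifferentiableAt ℝ f8 x)
    (heq : (fun y => f1 y + f2 y + f3 y - f4 y + f5 y - f6 y - f7 y - f8 y) = g)
    (v : ℝ × ℝ) :
    fderiv ℝ g x v = fderiv ℝ f1 x v + fderiv ℝ f2 x v + fderiv ℝ f3 x v - fderiv ℝ f4 x v
      + fderiv ℝ f5 x v - fderiv ℝ f6 x v - fderiv ℝ f7 x v - fderiv ℝ f8 x v := by
  have H := (((((((h1.hasFDerivAt.add h2.hasFDerivAt).add h3.hasFDerivAt).sub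
    h4.hasFDerivAt).add h5.hasFDerivAt).sub h6.hasFDerivAt).sub h7.hasFDerivAt).sub
    h8.hasFDerivAt)
  rw [← heq]; change fderiv ℝ (f1 + f2 + f3 - f4 + f5 - f6 - f7 - f8) x v = _
  rw [H.fderiv]
  simp

lemma combo_neg_add {x : ℝ × ℝ} {f g : ℝ × ℝ → ℝ}
    (hf : DifferentiableAt ℝ f x) (hg : DifferentiableAt ℝ g x) (v : ℝ × ℝ) :
    fderiv ℝ (fun y => -(f y) + g y) x v = -(fderiv ℝ f x v) + fderiv ℝ g x v := by
  have H := hf.hasFDerivAt.neg.add hg.hasFDerivAt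
  change fderiv ℝ (-f + g) x v = _; rw [H.fderiv]; simp

lemma combo_add {x : ℝ × ℝ} {f g : ℝ × ℝ → ℝ}
    (hf : DifferentiableAt ℝ f x) (hg : DifferentiableAt ℝ g x) (v : ℝ × ℝ) :
    fderiv ℝ (fun y => f y + g y) x v = fderiv ℝ f x v + fderiv ℝ g x v := by
  have H := hf.hasFDerivAt.add hg.hasFDerivAt
  change fderiv ℝ (f + g) x v = _; rw [H.fderiv]; simp


/-- Decomposition of `L_μφ = (∂₂₂−∂₁₁)ω₁ + 2∂₁₂ω₂`, with `ω₁ = μ(∂₂₂−∂₁₁)φ` and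
`ω₂ = 2μ∂₁₂φ`, in tangential and normal directions along a unit vector field
`τ̄ = (t1, t2)` with normal `n = (−τ̄₂, τ̄₁)`. -/
theorem Lmu_tangential_normal_decomposition
    (μ φ t1 t2 : ℝ × ℝ → ℝ)
    (hμ : ContDiff ℝ 2 μ) (hφ : ContDiff ℝ 4 φ)
    (ht1 : ContDiff ℝ 1 t1) (ht2 : ContDiff ℝ 1 t2)
    (hunit : ∀ x, t1 x ^ 2 + t2 x ^ 2 = 1)
    (ω1 ω2 : ℝ × ℝ → ℝ)
    (hω1 : ω1 = fun x => μ x * (pd2 (pd2 φ) x - pd1 (pd1 φ) x))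
    (hω2 : ω2 = fun x => 2 * μ x * pd1 (pd2 φ) x) :
    ∀ x : ℝ × ℝ,
      (pd2 (pd2 ω1) x - pd1 (pd1 ω1) x) + 2 * pd1 (pd2 ω2) x
      = -(dTauStar t1 t2 (fun y => (t2 y ^ 2 - t1 y ^ 2) * dTau t1 t2 ω1 y) x)
        - dTauStar t1 t2 (fun y => 2 * t1 y * t2 y * dN t1 t2 ω1 y) x
        - dNStar t1 t2 (fun y => 2 * t1 y * t2 y * dTau t1 t2 ω1 y) x
        + dNStar t1 t2 (fun y => (t2 y ^ 2 - t1 y ^ 2) * dN t1 t2 ω1 y) x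
        - dTauStar t1 t2 (fun y => 2 * t1 y * t2 y * dTau t1 t2 ω2 y) x
        + dTauStar t1 t2 (fun y => (t2 y ^ 2 - t1 y ^ 2) * dN t1 t2 ω2 y) x
        + dNStar t1 t2 (fun y => (t2 y ^ 2 - t1 y ^ 2) * dTau t1 t2 ω2 y) x
        + dNStar t1 t2 (fun y => 2 * t1 y * t2 y * dN t1 t2 ω2 y) x := by
  intro x
  have hw1 : ContDiff ℝ 2 ω1 := by
    rw [hω1]
    exact hμ.mul ((pdc2 (m := 2) (pdc2 (m := 3) hφ (by norm_num)) (by norm_num)).sub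
      (pdc1 (m := 2) (pdc1 (m := 3) hφ (by norm_num)) (by norm_num)))
  have hw2 : ContDiff ℝ 2 ω2 := by
    rw [hω2]
    exact (contDiff_const.mul hμ).mul (pdc1 (m := 2) (pdc2 (m := 3) hφ (by norm_num)) (by norm_num))
  have hu1 : ContDiff ℝ 1 (dTau t1 t2 ω1) := by
    unfold dTau
    exact (ht1.mul (pdc1 hw1 (by norm_num))).add (ht2.mul (pdc2 hw1 (by norm_num)))
  have hv1 : ContDiff ℝ 1 (dN t1 t2 ω1) := by
    unfold dN
    exact (ht2.neg.mul (pdc1 hw1 (by norm_num))).add (ht1.mul (pdc2 hw1 (by norm_num)))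
  have hu2 : ContDiff ℝ 1 (dTau t1 t2 ω2) := by
    unfold dTau
    exact (ht1.mul (pdc1 hw2 (by norm_num))).add (ht2.mul (pdc2 hw2 (by norm_num)))
  have hv2 : ContDiff ℝ 1 (dN t1 t2 ω2) := by
    unfold dN
    exact (ht2.neg.mul (pdc1 hw2 (by norm_num))).add (ht1.mul (pdc2 hw2 (by norm_num)))
  have hc : ContDiff ℝ 1 (fun y => t2 y ^ 2 - t1 y ^ 2) := (ht2.pow 2).sub (ht1.pow 2)
  have hd : ContDiff ℝ 1 (fun y => 2 * t1 y * t2 y) := (contDiff_const.mul ht1).mul ht2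
  have dp1w1 : DifferentiableAt ℝ (pd1 ω1) x := (pdc1 hw1 (by norm_num)).differentiable one_ne_zero x
  have dp2w1 : DifferentiableAt ℝ (pd2 ω1) x := (pdc2 hw1 (by norm_num)).differentiable one_ne_zero x
  have dp1w2 : DifferentiableAt ℝ (pd1 ω2) x := (pdc1 hw2 (by norm_num)).differentiable one_ne_zero x
  have dp2w2 : DifferentiableAt ℝ (pd2 ω2) x := (pdc2 hw2 (by norm_num)).differentiable one_ne_zero x
  have heqP : (fun y => t1 y * ((t2 y ^ 2 - t1 y ^ 2) * dTau t1 t2 ω1 y)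
      + t1 y * (2 * t1 y * t2 y * dN t1 t2 ω1 y)
      + -(t2 y) * (2 * t1 y * t2 y * dTau t1 t2 ω1 y)
      - -(t2 y) * ((t2 y ^ 2 - t1 y ^ 2) * dN t1 t2 ω1 y)
      + t1 y * (2 * t1 y * t2 y * dTau t1 t2 ω2 y)
      - t1 y * ((t2 y ^ 2 - t1 y ^ 2) * dN t1 t2 ω2 y)
      - -(t2 y) * ((t2 y ^ 2 - t1 y ^ 2) * dTau t1 t2 ω2 y)
      - -(t2 y) * (2 * t1 y * t2 y * dN t1 t2 ω2 y))
      = (fun y => -(pd1 ω1 y) + pd2 ω2 y) := by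
    funext y
    simp only [dTau, dN]
    linear_combination (t1 y ^ 2 + t2 y ^ 2 + 1) * (pd2 ω2 y - pd1 ω1 y) * hunit y
  have heqQ : (fun y => t2 y * ((t2 y ^ 2 - t1 y ^ 2) * dTau t1 t2 ω1 y)
      + t2 y * (2 * t1 y * t2 y * dN t1 t2 ω1 y)
      + t1 y * (2 * t1 y * t2 y * dTau t1 t2 ω1 y)
      - t1 y * ((t2 y ^ 2 - t1 y ^ 2) * dN t1 t2 ω1 y)
      + t2 y * (2 * t1 y * t2 y * dTau t1 t2 ω2 y)
      - t2 y * ((t2 y ^ 2 - t1 y ^ 2) * dN t1 t2 ω2 y)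
      - t1 y * ((t2 y ^ 2 - t1 y ^ 2) * dTau t1 t2 ω2 y)
      - t1 y * (2 * t1 y * t2 y * dN t1 t2 ω2 y))
      = (fun y => pd2 ω1 y + pd1 ω2 y) := by
    funext y
    simp only [dTau, dN]
    linear_combination (t1 y ^ 2 + t2 y ^ 2 + 1) * (pd2 ω1 y + pd1 ω2 y) * hunit y
  have k1 : pd1 (fun y => -(pd1 ω1 y) + pd2 ω2 y) x
      = pd1 (fun y => t1 y * ((t2 y ^ 2 - t1 y ^ 2) * dTau t1 t2 ω1 y)) x
      + pd1 (fun y => t1 y * (2 * t1 y * t2 y * dN t1 t2 ω1 y)) x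
      + pd1 (fun y => -(t2 y) * (2 * t1 y * t2 y * dTau t1 t2 ω1 y)) x
      - pd1 (fun y => -(t2 y) * ((t2 y ^ 2 - t1 y ^ 2) * dN t1 t2 ω1 y)) x
      + pd1 (fun y => t1 y * (2 * t1 y * t2 y * dTau t1 t2 ω2 y)) x
      - pd1 (fun y => t1 y * ((t2 y ^ 2 - t1 y ^ 2) * dN t1 t2 ω2 y)) x
      - pd1 (fun y => -(t2 y) * ((t2 y ^ 2 - t1 y ^ 2) * dTau t1 t2 ω2 y)) x
      - pd1 (fun y => -(t2 y) * (2 * t1 y * t2 y * dN t1 t2 ω2 y)) x :=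
    combo8 ((ht1.mul (hc.mul hu1)).differentiable one_ne_zero x)
      ((ht1.mul (hd.mul hv1)).differentiable one_ne_zero x)
      ((ht2.neg.mul (hd.mul hu1)).differentiable one_ne_zero x)
      ((ht2.neg.mul (hc.mul hv1)).differentiable one_ne_zero x)
      ((ht1.mul (hd.mul hu2)).differentiable one_ne_zero x)
      ((ht1.mul (hc.mul hv2)).differentiable one_ne_zero x)
      ((ht2.neg.mul (hc.mul hu2)).differentiable one_ne_zero x)
      ((ht2.neg.mul (hd.mul hv2)).differentiable one_ne_zero x)
      heqP (1, 0)
  have k2 : pd2 (fun y => pd2 ω1 y + pd1 ω2 y) x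
      = pd2 (fun y => t2 y * ((t2 y ^ 2 - t1 y ^ 2) * dTau t1 t2 ω1 y)) x
      + pd2 (fun y => t2 y * (2 * t1 y * t2 y * dN t1 t2 ω1 y)) x
      + pd2 (fun y => t1 y * (2 * t1 y * t2 y * dTau t1 t2 ω1 y)) x
      - pd2 (fun y => t1 y * ((t2 y ^ 2 - t1 y ^ 2) * dN t1 t2 ω1 y)) x
      + pd2 (fun y => t2 y * (2 * t1 y * t2 y * dTau t1 t2 ω2 y)) x
      - pd2 (fun y => t2 y * ((t2 y ^ 2 - t1 y ^ 2) * dN t1 t2 ω2 y)) x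
      - pd2 (fun y => t1 y * ((t2 y ^ 2 - t1 y ^ 2) * dTau t1 t2 ω2 y)) x
      - pd2 (fun y => t1 y * (2 * t1 y * t2 y * dN t1 t2 ω2 y)) x :=
    combo8 ((ht2.mul (hc.mul hu1)).differentiable one_ne_zero x)
      ((ht2.mul (hd.mul hv1)).differentiable one_ne_zero x)
      ((ht1.mul (hd.mul hu1)).differentiable one_ne_zero x)
      ((ht1.mul (hc.mul hv1)).differentiable one_ne_zero x)
      ((ht2.mul (hd.mul hu2)).differentiable one_ne_zero x)
      ((ht2.mul (hc.mul hv2)).differentiable one_ne_zero x)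
      ((ht1.mul (hc.mul hu2)).differentiable one_ne_zero x)
      ((ht1.mul (hd.mul hv2)).differentiable one_ne_zero x)
      heqQ (0, 1)
  have kP : pd1 (fun y => -(pd1 ω1 y) + pd2 ω2 y) x
      = -(pd1 (pd1 ω1) x) + pd1 (pd2 ω2) x := combo_neg_add dp1w1 dp2w2 (1, 0)
  have kQ : pd2 (fun y => pd2 ω1 y + pd1 ω2 y) x
      = pd2 (pd2 ω1) x + pd2 (pd1 ω2) x := combo_add dp2w1 dp1w2 (0, 1)
  have hsym : pd1 (pd2 ω2) x = pd2 (pd1 ω2) x := pd_symm hw2 x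
  simp only [dTauStar, dNStar]
  linarith [k1, k2, kP, kQ, hsym]
end

section
/- Let μ : ℝ² → ℝ be a nowhere-vanishing function, φ : ℝ² → ℝ be twice continuously differentiable, and let τ̄ = (τ̄₁, τ̄₂) : ℝ² → ℝ² be a vector field with |τ̄(x)| = 1 for all x, with n = (−τ̄₂, τ̄₁). Define α = (τ̄ ⊗ n) : (μ S∇⊥φ). Then the normal derivative of the velocity u = ∇⊥φ is recovered from α and tangential derivatives: pointwise on ℝ², ∂_n(∇⊥φ) = (α/μ)τ̄ − 2(τ̄ · ∂_{τ̄}∇φ)τ̄ + ∂_{τ̄}∇φ, where ∂_n and ∂_{τ̄} act componentwise and τ̄ · ∂_{τ̄}∇φ = Σ_{i,j} τ̄ᵢτ̄ⱼ∂ᵢⱼφ. -/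
/-- Recovery of the normal derivative of the velocity `u = ∇⊥φ` from the good unknown
`α = (τ̄ ⊗ n) : (μ S∇⊥φ)` and tangential derivatives:
`∂_n(∇⊥φ) = (α/μ)τ̄ − 2(τ̄ · ∂_τ̄∇φ)τ̄ + ∂_τ̄∇φ`, with `n = (−τ̄₂, τ̄₁)`. -/
theorem normal_derivative_of_velocity_from_alpha
    (μ φ t1 t2 : ℝ × ℝ → ℝ)
    (hμ : ∀ x, μ x ≠ 0)
    (hφ : ContDiff ℝ 2 φ)
    (hunit : ∀ x, t1 x ^ 2 + t2 x ^ 2 = 1)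
    (u1 u2 : ℝ × ℝ → ℝ)
    (hu1 : u1 = fun x => -(pd2 φ x)) (hu2 : u2 = pd1 φ)
    (α : ℝ × ℝ → ℝ)
    (hα : α = fun x =>
      t1 x * -(t2 x) * (μ x * (pd1 u1 x + pd1 u1 x))
      + t1 x * t1 x * (μ x * (pd1 u2 x + pd2 u1 x))
      + t2 x * -(t2 x) * (μ x * (pd2 u1 x + pd1 u2 x))
      + t2 x * t1 x * (μ x * (pd2 u2 x + pd2 u2 x))) :
    ∀ x : ℝ × ℝ,
      (dN t1 t2 u1 x
        = α x / μ x * t1 x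
          - 2 * (t1 x * t1 x * pd1 (pd1 φ) x + t1 x * t2 x * pd1 (pd2 φ) x
            + t2 x * t1 x * pd2 (pd1 φ) x + t2 x * t2 x * pd2 (pd2 φ) x) * t1 x
          + (t1 x * pd1 (pd1 φ) x + t2 x * pd2 (pd1 φ) x)) ∧
      (dN t1 t2 u2 x
        = α x / μ x * t2 x
          - 2 * (t1 x * t1 x * pd1 (pd1 φ) x + t1 x * t2 x * pd1 (pd2 φ) x
            + t2 x * t1 x * pd2 (pd1 φ) x + t2 x * t2 x * pd2 (pd2 φ) x) * t2 x
          + (t1 x * pd1 (pd2 φ) x + t2 x * pd2 (pd2 φ) x)) := by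
  have hdφ : Differentiable ℝ φ := hφ.differentiable (by norm_num)
  have hd : Differentiable ℝ (fderiv ℝ φ) :=
    (hφ.fderiv_right (m := 1) (by norm_num)).differentiable (by norm_num)
  have key : ∀ (v w x : ℝ × ℝ),
      fderiv ℝ (fun y => fderiv ℝ φ y v) x w = fderiv ℝ (fderiv ℝ φ) x w v := by
    intro v w x
    rw [fderiv_clm_apply (hd.differentiableAt) (differentiableAt_const v)]
    simp
  intro x
  set A := fderiv ℝ (fderiv ℝ φ) x with hA
  have sym : A ((1:ℝ),(0:ℝ)) ((0:ℝ),(1:ℝ)) = A (0,1) (1,0) :=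
    second_derivative_symmetric (fun y => (hdφ y).hasFDerivAt) ((hd x).hasFDerivAt) _ _
  have e11 : pd1 (pd1 φ) x = A (1,0) (1,0) := key (1,0) (1,0) x
  have e12 : pd1 (pd2 φ) x = A (1,0) (0,1) := key (0,1) (1,0) x
  have e21 : pd2 (pd1 φ) x = A (0,1) (1,0) := key (1,0) (0,1) x
  have e22 : pd2 (pd2 φ) x = A (0,1) (0,1) := key (0,1) (0,1) x
  have hn1 : ∀ w : ℝ × ℝ, fderiv ℝ (fun y => -(pd2 φ y)) x w
      = -(fderiv ℝ (fun y => fderiv ℝ φ y (0,1)) x w) := by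
    intro w
    rw [fderiv_fun_neg]
    rfl
  have f11 : pd1 u1 x = -(A (1,0) (0,1)) := by
    rw [hu1]; show fderiv ℝ (fun y => -(pd2 φ y)) x (1,0) = _
    rw [hn1, key]
  have f21 : pd2 u1 x = -(A (0,1) (0,1)) := by
    rw [hu1]; show fderiv ℝ (fun y => -(pd2 φ y)) x (0,1) = _
    rw [hn1, key]
  have f12 : pd1 u2 x = A (1,0) (1,0) := by
    rw [hu2]; exact key (1,0) (1,0) x
  have f22 : pd2 u2 x = A (0,1) (1,0) := by
    rw [hu2]; exact key (1,0) (0,1) x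
  have hαx : α x / μ x = 4 * t1 x * t2 x * A (1,0) (0,1)
      + (t1 x ^ 2 - t2 x ^ 2) * (A (1,0) (1,0) - A (0,1) (0,1)) := by
    have : α x = μ x * (4 * t1 x * t2 x * A (1,0) (0,1)
        + (t1 x ^ 2 - t2 x ^ 2) * (A (1,0) (1,0) - A (0,1) (0,1))) := by
      rw [hα]
      simp only [f11, f21, f12, f22, ← sym]
      ring
    rw [this, mul_div_cancel_left₀ _ (hμ x)]
  have ht := hunit x
  constructor
  · simp only [dN, f11, f21, hαx, e11, e12, e21, e22, ← sym, ← hA]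
    linear_combination (t1 x * (A (1,0) (1,0) + A (0,1) (0,1))) * ht
  · simp only [dN, f12, f22, hαx, e11, e12, e21, e22, ← sym, ← hA]
    linear_combination (t2 x * (A (1,0) (1,0) + A (0,1) (0,1))) * ht
end

section
/- Let u, τ : ℝ × ℝ² → ℝ² be continuously differentiable and μ : ℝ × ℝ² → ℝ be twice continuously differentiable. Suppose the transport equation ∂_tμ + u·∇μ = 0 and the vector-field equation ∂_tτ + (u·∇)τ = (τ·∇)u hold pointwise. Then the tangential derivative ∂_τμ = τ·∇μ is also freely transported: ∂_t(∂_τμ) + u·∇(∂_τμ) = 0 pointwise. -/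
/-- Time derivative of a function on `ℝ × ℝ²` (first coordinate is time). -/
noncomputable def dt (f : ℝ × ℝ × ℝ → ℝ) : ℝ × ℝ × ℝ → ℝ :=
  fun p => deriv (fun s => f (s, p.2)) p.1

/-- Spatial partial derivative in the `x₁` direction of a function on `ℝ × ℝ²`. -/
noncomputable def dx1 (f : ℝ × ℝ × ℝ → ℝ) : ℝ × ℝ × ℝ → ℝ :=
  fun p => fderiv ℝ (fun x : ℝ × ℝ => f (p.1, x)) p.2 (1, 0)

/-- Spatial partial derivative in the `x₂` direction of a function on `ℝ × ℝ²`. -/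
noncomputable def dx2 (f : ℝ × ℝ × ℝ → ℝ) : ℝ × ℝ × ℝ → ℝ :=
  fun p => fderiv ℝ (fun x : ℝ × ℝ => f (p.1, x)) p.2 (0, 1)

/-- Material derivative `D/Dt = ∂ₜ + u·∇` along the velocity field `u = (u1, u2)`. -/
noncomputable def matD (u1 u2 f : ℝ × ℝ × ℝ → ℝ) : ℝ × ℝ × ℝ → ℝ :=
  fun p => dt f p + u1 p * dx1 f p + u2 p * dx2 f p

lemma dt_eq {f : ℝ × ℝ × ℝ → ℝ} {p : ℝ × ℝ × ℝ} (hf : DifferentiableAt ℝ f p) :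
    dt f p = fderiv ℝ f p (1, 0, 0) := by
  have h1 : HasDerivAt (fun s : ℝ => (s, p.2)) ((1:ℝ), (0:ℝ×ℝ)) p.1 :=
    HasDerivAt.prodMk (hasDerivAt_id p.1) (hasDerivAt_const _ _)
  have h2 : HasFDerivAt f (fderiv ℝ f p) ((fun s : ℝ => (s, p.2)) p.1) := by
    simpa using hf.hasFDerivAt
  have := (h2.comp_hasDerivAt p.1 h1).deriv
  exact this

lemma dx1_eq {f : ℝ × ℝ × ℝ → ℝ} {p : ℝ × ℝ × ℝ} (hf : DifferentiableAt ℝ f p) :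
    dx1 f p = fderiv ℝ f p (0, 1, 0) := by
  have h1 : HasFDerivAt (fun x : ℝ × ℝ => (p.1, x))
      ((0 : (ℝ×ℝ) →L[ℝ] ℝ).prod (ContinuousLinearMap.id ℝ (ℝ×ℝ))) p.2 :=
    HasFDerivAt.prodMk (hasFDerivAt_const p.1 p.2) (hasFDerivAt_id p.2)
  have h2 : HasFDerivAt f (fderiv ℝ f p) ((fun x : ℝ × ℝ => (p.1, x)) p.2) := by
    simpa using hf.hasFDerivAt
  have := (h2.comp p.2 h1).fderiv
  rw [dx1, show (fun x : ℝ × ℝ => f (p.1, x)) = f ∘ Prod.mk p.1 from rfl, this]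
  rfl

lemma dx2_eq {f : ℝ × ℝ × ℝ → ℝ} {p : ℝ × ℝ × ℝ} (hf : DifferentiableAt ℝ f p) :
    dx2 f p = fderiv ℝ f p (0, 0, 1) := by
  have h1 : HasFDerivAt (fun x : ℝ × ℝ => (p.1, x))
      ((0 : (ℝ×ℝ) →L[ℝ] ℝ).prod (ContinuousLinearMap.id ℝ (ℝ×ℝ))) p.2 :=
    HasFDerivAt.prodMk (hasFDerivAt_const p.1 p.2) (hasFDerivAt_id p.2)
  have h2 : HasFDerivAt f (fderiv ℝ f p) ((fun x : ℝ × ℝ => (p.1, x)) p.2) := by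
    simpa using hf.hasFDerivAt
  have := (h2.comp p.2 h1).fderiv
  rw [dx2, show (fun x : ℝ × ℝ => f (p.1, x)) = f ∘ Prod.mk p.1 from rfl, this]
  rfl

lemma apply_decomp (L : (ℝ×ℝ×ℝ) →L[ℝ] ℝ) (c a b : ℝ) :
    L (c, a, b) = c * L (1,0,0) + a * L (0,1,0) + b * L (0,0,1) := by
  have h : ((c:ℝ), a, b) = c • ((1:ℝ),(0:ℝ),(0:ℝ)) + a • ((0:ℝ),(1:ℝ),(0:ℝ)) + b • ((0:ℝ),(0:ℝ),(1:ℝ)) := by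
    simp [Prod.ext_iff]
  rw [h, map_add, map_add, map_smul, map_smul, map_smul, smul_eq_mul, smul_eq_mul, smul_eq_mul]

lemma matD_eq {u1 u2 f : ℝ × ℝ × ℝ → ℝ} {p : ℝ × ℝ × ℝ} (hf : DifferentiableAt ℝ f p) :
    matD u1 u2 f p = fderiv ℝ f p (1, u1 p, u2 p) := by
  rw [matD, dt_eq hf, dx1_eq hf, dx2_eq hf, apply_decomp (fderiv ℝ f p) 1 (u1 p) (u2 p)]
  ring

set_option maxHeartbeats 2000000 in
/-- If `μ` is freely transported (`∂ₜμ + u·∇μ = 0`) and `τ` solves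
`∂ₜτ + (u·∇)τ = (τ·∇)u`, then the tangential derivative `∂_τμ = τ·∇μ` is also freely
transported: `∂ₜ(∂_τμ) + u·∇(∂_τμ) = 0`. -/
theorem tangential_derivative_freely_transported
    (u1 u2 τ1 τ2 μ : ℝ × ℝ × ℝ → ℝ)
    (hu1 : ContDiff ℝ 1 u1) (hu2 : ContDiff ℝ 1 u2)
    (hτ1 : ContDiff ℝ 1 τ1) (hτ2 : ContDiff ℝ 1 τ2)
    (hμ : ContDiff ℝ 2 μ)
    (hμtrans : ∀ p : ℝ × ℝ × ℝ, matD u1 u2 μ p = 0)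
    (hτeq1 : ∀ p : ℝ × ℝ × ℝ, matD u1 u2 τ1 p = τ1 p * dx1 u1 p + τ2 p * dx2 u1 p)
    (hτeq2 : ∀ p : ℝ × ℝ × ℝ, matD u1 u2 τ2 p = τ1 p * dx1 u2 p + τ2 p * dx2 u2 p) :
    ∀ p : ℝ × ℝ × ℝ,
      matD u1 u2 (fun q => τ1 q * dx1 μ q + τ2 q * dx2 μ q) p = 0 := by
  intro p
  have hμd : Differentiable ℝ μ := hμ.differentiable (by norm_num)
  have hc : ContDiff ℝ 1 (fderiv ℝ μ) := hμ.fderiv_right (by norm_num)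
  have hcd : ∀ q, HasFDerivAt (fderiv ℝ μ) (fderiv ℝ (fderiv ℝ μ) q) q :=
    fun q => ((hc.differentiable one_ne_zero) q).hasFDerivAt
  set D2 := fderiv ℝ (fderiv ℝ μ) p with hD2
  have symm : ∀ v w, D2 v w = D2 w v :=
    fun v w => second_derivative_symmetric (fun y => (hμd y).hasFDerivAt) (hcd p) v w
  -- differentiated transport equation
  set U' : (ℝ×ℝ×ℝ) →L[ℝ] (ℝ×ℝ×ℝ) :=
    (0 : (ℝ×ℝ×ℝ) →L[ℝ] ℝ).prod ((fderiv ℝ u1 p).prod (fderiv ℝ u2 p)) with hU'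
  have hU : HasFDerivAt (fun q : ℝ×ℝ×ℝ => ((1:ℝ), u1 q, u2 q)) U' p :=
    HasFDerivAt.prodMk (hasFDerivAt_const 1 p)
      (HasFDerivAt.prodMk ((hu1.differentiable one_ne_zero p).hasFDerivAt) ((hu2.differentiable one_ne_zero p).hasFDerivAt))
  have hT : HasFDerivAt (fun q => fderiv ℝ μ q ((1:ℝ), u1 q, u2 q))
      ((fderiv ℝ μ p).comp U' + D2.flip ((1:ℝ), u1 p, u2 p)) p := (hcd p).clm_apply hU
  have hT0 : (fun q => fderiv ℝ μ q ((1:ℝ), u1 q, u2 q)) = fun _ => (0:ℝ) := by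
    funext q
    rw [← matD_eq (hμd q)]
    exact hμtrans q
  have hzero : ((fderiv ℝ μ p).comp U' + D2.flip ((1:ℝ), u1 p, u2 p))
      = (0 : (ℝ×ℝ×ℝ) →L[ℝ] ℝ) := by
    apply hT.unique
    rw [hT0]
    exact hasFDerivAt_const 0 p
  have k1 := ContinuousLinearMap.ext_iff.1 hzero ((0:ℝ),(1:ℝ),(0:ℝ))
  have k2 := ContinuousLinearMap.ext_iff.1 hzero ((0:ℝ),(0:ℝ),(1:ℝ))
  simp only [ContinuousLinearMap.add_apply, ContinuousLinearMap.coe_comp', Function.comp_apply,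
    ContinuousLinearMap.flip_apply, ContinuousLinearMap.zero_apply, ContinuousLinearMap.prod_apply,
    hU'] at k1 k2
  -- the transported quantity
  have hF1 : HasFDerivAt (fun q => fderiv ℝ μ q ((0:ℝ),(1:ℝ),(0:ℝ)))
      ((fderiv ℝ μ p).comp 0 + D2.flip ((0:ℝ),(1:ℝ),(0:ℝ))) p :=
    (hcd p).clm_apply (hasFDerivAt_const _ _)
  have hF2 : HasFDerivAt (fun q => fderiv ℝ μ q ((0:ℝ),(0:ℝ),(1:ℝ)))
      ((fderiv ℝ μ p).comp 0 + D2.flip ((0:ℝ),(0:ℝ),(1:ℝ))) p :=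
    (hcd p).clm_apply (hasFDerivAt_const _ _)
  have hg1 := ((hτ1.differentiable one_ne_zero p).hasFDerivAt).mul hF1
  have hg2 := ((hτ2.differentiable one_ne_zero p).hasFDerivAt).mul hF2
  have hg : HasFDerivAt (fun q => τ1 q * fderiv ℝ μ q ((0:ℝ),(1:ℝ),(0:ℝ))
      + τ2 q * fderiv ℝ μ q ((0:ℝ),(0:ℝ),(1:ℝ))) _ p := hg1.add hg2
  have hfun : (fun q => τ1 q * dx1 μ q + τ2 q * dx2 μ q)
      = (fun q => τ1 q * fderiv ℝ μ q ((0:ℝ),(1:ℝ),(0:ℝ))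
          + τ2 q * fderiv ℝ μ q ((0:ℝ),(0:ℝ),(1:ℝ))) := by
    funext q
    rw [dx1_eq (hμd q), dx2_eq (hμd q)]
  rw [hfun, matD_eq hg.differentiableAt, hg.fderiv]
  -- tau equations at p
  have ht1 : fderiv ℝ τ1 p ((1:ℝ), u1 p, u2 p)
      = τ1 p * fderiv ℝ u1 p (0,1,0) + τ2 p * fderiv ℝ u1 p (0,0,1) := by
    rw [← matD_eq (hτ1.differentiable one_ne_zero p), ← dx1_eq (hu1.differentiable one_ne_zero p),
      ← dx2_eq (hu1.differentiable one_ne_zero p)]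
    exact hτeq1 p
  have ht2 : fderiv ℝ τ2 p ((1:ℝ), u1 p, u2 p)
      = τ1 p * fderiv ℝ u2 p (0,1,0) + τ2 p * fderiv ℝ u2 p (0,0,1) := by
    rw [← matD_eq (hτ2.differentiable one_ne_zero p), ← dx1_eq (hu2.differentiable one_ne_zero p),
      ← dx2_eq (hu2.differentiable one_ne_zero p)]
    exact hτeq2 p
  simp only [ContinuousLinearMap.add_apply, ContinuousLinearMap.smul_apply,
    ContinuousLinearMap.coe_comp', Function.comp_apply, ContinuousLinearMap.flip_apply,
    ContinuousLinearMap.zero_apply, map_zero, smul_eq_mul]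
  rw [ht1, ht2, symm ((1:ℝ), u1 p, u2 p) (0,1,0), symm ((1:ℝ), u1 p, u2 p) (0,0,1)]
  rw [apply_decomp (fderiv ℝ μ p) 0 (fderiv ℝ u1 p (0,1,0)) (fderiv ℝ u2 p (0,1,0))] at k1
  rw [apply_decomp (fderiv ℝ μ p) 0 (fderiv ℝ u1 p (0,0,1)) (fderiv ℝ u2 p (0,0,1))] at k2
  linear_combination τ1 p * k1 + τ2 p * k2
end

section
/- Let u, τ : ℝ × ℝ² → ℝ² be continuously differentiable with τ(t,x) ≠ 0 for all (t,x), and let μ : ℝ × ℝ² → ℝ be twice continuously differentiable. Suppose ∂_tμ + u·∇μ = 0 and ∂_tτ + (u·∇)τ = (τ·∇)u hold pointwise, and set τ̄ = τ/|τ|. Then ∂_{τ̄}μ = τ̄·∇μ satisfies ∂_t(∂_{τ̄}μ) + u·∇(∂_{τ̄}μ) = −(∂_{τ̄}μ)(τ̄ · ∂_{τ̄}u) pointwise, where ∂_{τ̄}u = (τ̄·∇)u. -/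
set_option maxHeartbeats 2000000 in
/-- If `μ` is freely transported and `τ` solves `∂ₜτ + (u·∇)τ = (τ·∇)u` with `τ ≠ 0`,
then `∂_τ̄μ = τ̄·∇μ` (with `τ̄ = τ/|τ|`) satisfies
`∂ₜ(∂_τ̄μ) + u·∇(∂_τ̄μ) = −(∂_τ̄μ)(τ̄ · ∂_τ̄u)`. -/
theorem renormalized_tangential_derivative_equation
    (u1 u2 τ1 τ2 μ : ℝ × ℝ × ℝ → ℝ)
    (hu1 : ContDiff ℝ 1 u1) (hu2 : ContDiff ℝ 1 u2)
    (hτ1 : ContDiff ℝ 1 τ1) (hτ2 : ContDiff ℝ 1 τ2)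
    (hμ : ContDiff ℝ 2 μ)
    (hτne : ∀ p : ℝ × ℝ × ℝ, (τ1 p, τ2 p) ≠ (0, 0))
    (hμtrans : ∀ p : ℝ × ℝ × ℝ, matD u1 u2 μ p = 0)
    (hτeq1 : ∀ p : ℝ × ℝ × ℝ, matD u1 u2 τ1 p = τ1 p * dx1 u1 p + τ2 p * dx2 u1 p)
    (hτeq2 : ∀ p : ℝ × ℝ × ℝ, matD u1 u2 τ2 p = τ1 p * dx1 u2 p + τ2 p * dx2 u2 p)
    (tb1 tb2 : ℝ × ℝ × ℝ → ℝ)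
    (htb1 : tb1 = fun p => τ1 p / Real.sqrt (τ1 p ^ 2 + τ2 p ^ 2))
    (htb2 : tb2 = fun p => τ2 p / Real.sqrt (τ1 p ^ 2 + τ2 p ^ 2)) :
    ∀ p : ℝ × ℝ × ℝ,
      matD u1 u2 (fun q => tb1 q * dx1 μ q + tb2 q * dx2 μ q) p
      = -((tb1 p * dx1 μ p + tb2 p * dx2 μ p)
          * (tb1 p * tb1 p * dx1 u1 p + tb1 p * tb2 p * dx1 u2 p
            + tb2 p * tb1 p * dx2 u1 p + tb2 p * tb2 p * dx2 u2 p)) := by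
  subst htb1 htb2
  intro p
  have hu1d : Differentiable ℝ u1 := hu1.differentiable one_ne_zero
  have hu2d : Differentiable ℝ u2 := hu2.differentiable one_ne_zero
  have hτ1d : Differentiable ℝ τ1 := hτ1.differentiable one_ne_zero
  have hτ2d : Differentiable ℝ τ2 := hτ2.differentiable one_ne_zero
  have hμd : Differentiable ℝ μ := hμ.differentiable two_ne_zero
  set Φ : ℝ × ℝ × ℝ → (ℝ × ℝ × ℝ →L[ℝ] ℝ) := fderiv ℝ μ with hΦdef
  have hΦ : ContDiff ℝ 1 Φ := hμ.fderiv_right (by norm_num)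
  have hΦd : Differentiable ℝ Φ := hΦ.differentiable one_ne_zero
  set e0 : ℝ × ℝ × ℝ := (1, 0, 0) with he0
  set e1 : ℝ × ℝ × ℝ := (0, 1, 0) with he1
  set e2 : ℝ × ℝ × ℝ := (0, 0, 1) with he2
  set v : ℝ × ℝ × ℝ := (1, u1 p, u2 p) with hv
  -- second derivative and its symmetry
  set f'' : (ℝ × ℝ × ℝ) →L[ℝ] ((ℝ × ℝ × ℝ) →L[ℝ] ℝ) := fderiv ℝ Φ p with hf''
  have hΦp : HasFDerivAt Φ f'' p := (hΦd p).hasFDerivAt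
  have hsymm : ∀ w z, f'' w z = f'' z w :=
    second_derivative_symmetric (fun y => (hμd y).hasFDerivAt) hΦp
  -- directional derivative functions of μ
  have hm1fun : dx1 μ = fun q => Φ q e1 := funext fun q => dx1_eq (hμd q)
  have hm2fun : dx2 μ = fun q => Φ q e2 := funext fun q => dx2_eq (hμd q)
  have hm1 : HasFDerivAt (fun q => Φ q e1) ((ContinuousLinearMap.apply ℝ ℝ e1).comp f'') p :=
    (ContinuousLinearMap.apply ℝ ℝ e1).hasFDerivAt.comp p hΦp
  have hm2 : HasFDerivAt (fun q => Φ q e2) ((ContinuousLinearMap.apply ℝ ℝ e2).comp f'') p :=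
    (ContinuousLinearMap.apply ℝ ℝ e2).hasFDerivAt.comp p hΦp
  have hm0 : HasFDerivAt (fun q => Φ q e0) ((ContinuousLinearMap.apply ℝ ℝ e0).comp f'') p :=
    (ContinuousLinearMap.apply ℝ ℝ e0).hasFDerivAt.comp p hΦp
  -- decomposition of directional derivative
  have hdecomp : ∀ q : ℝ × ℝ × ℝ, Φ q (1, u1 q, u2 q) = Φ q e0 + u1 q * Φ q e1 + u2 q * Φ q e2 := by
    intro q
    have hw : ((1 : ℝ), u1 q, u2 q) = e0 + u1 q • e1 + u2 q • e2 := by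
      simp [he0, he1, he2, Prod.ext_iff]
    rw [hw, map_add, map_add, map_smul, map_smul, smul_eq_mul, smul_eq_mul]
  -- transport identity as a function identity
  have hT : (fun q => Φ q e0 + u1 q * Φ q e1 + u2 q * Φ q e2) = fun _ => (0 : ℝ) := by
    funext q
    have h := hμtrans q
    rw [matD_eq (hμd q)] at h
    rw [← hdecomp q]
    exact h
  -- differentiate the transport identity
  have hLHS : HasFDerivAt (fun q => Φ q e0 + u1 q * Φ q e1 + u2 q * Φ q e2)
      (((ContinuousLinearMap.apply ℝ ℝ e0).comp f''
        + (u1 p • ((ContinuousLinearMap.apply ℝ ℝ e1).comp f'') + Φ p e1 • fderiv ℝ u1 p))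
        + (u2 p • ((ContinuousLinearMap.apply ℝ ℝ e2).comp f'') + Φ p e2 • fderiv ℝ u2 p)) p :=
    (hm0.add (((hu1d p).hasFDerivAt.mul hm1))).add ((hu2d p).hasFDerivAt.mul hm2)
  rw [hT] at hLHS
  have hzero := (hasFDerivAt_const (0 : ℝ) p).unique hLHS
  have hkey : ∀ w : ℝ × ℝ × ℝ,
      f'' w e0 + (u1 p * f'' w e1 + Φ p e1 * fderiv ℝ u1 p w)
        + (u2 p * f'' w e2 + Φ p e2 * fderiv ℝ u2 p w) = 0 := by
    intro w
    have := congrFun (congrArg (fun (L : (ℝ × ℝ × ℝ) →L[ℝ] ℝ) => (L : (ℝ × ℝ × ℝ) → ℝ)) hzero.symm) w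
    simpa [ContinuousLinearMap.add_apply, ContinuousLinearMap.smul_apply,
      ContinuousLinearMap.comp_apply, ContinuousLinearMap.apply_apply, smul_eq_mul,
      mul_comm] using this
  -- key identities for the mixed second derivatives
  have hfv : ∀ w : ℝ × ℝ × ℝ, f'' w v = f'' w e0 + u1 p * f'' w e1 + u2 p * f'' w e2 := by
    intro w
    have hw : v = e0 + u1 p • e1 + u2 p • e2 := by
      simp [hv, he0, he1, he2, Prod.ext_iff]
    rw [hw, map_add, map_add, map_smul, map_smul, smul_eq_mul, smul_eq_mul]
  have key1 : f'' e1 v = -(fderiv ℝ u1 p e1 * Φ p e1 + fderiv ℝ u2 p e1 * Φ p e2) := by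
    have h := hkey e1
    rw [hfv e1]
    linear_combination h
  have key2 : f'' e2 v = -(fderiv ℝ u1 p e2 * Φ p e1 + fderiv ℝ u2 p e2 * Φ p e2) := by
    have h := hkey e2
    rw [hfv e2]
    linear_combination h
  -- the norm function
  have hSpos : 0 < τ1 p ^ 2 + τ2 p ^ 2 := by
    have h : τ1 p ≠ 0 ∨ τ2 p ≠ 0 := by
      by_contra hc
      push_neg at hc
      exact hτne p (by simp [hc.1, hc.2])
    rcases h with h | h
    · exact add_pos_of_pos_of_nonneg (pow_two_pos_of_ne_zero h) (sq_nonneg _)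
    · exact add_pos_of_nonneg_of_pos (sq_nonneg _) (pow_two_pos_of_ne_zero h)
  have hgpos : 0 < Real.sqrt (τ1 p ^ 2 + τ2 p ^ 2) := Real.sqrt_pos.2 hSpos
  have hgne : Real.sqrt (τ1 p ^ 2 + τ2 p ^ 2) ≠ 0 := ne_of_gt hgpos
  have hSne : τ1 p ^ 2 + τ2 p ^ 2 ≠ 0 := ne_of_gt hSpos
  -- derivative of the squared norm
  have hsq : HasFDerivAt (fun q => τ1 q ^ 2 + τ2 q ^ 2)
      ((τ1 p • fderiv ℝ τ1 p + τ1 p • fderiv ℝ τ1 p)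
        + (τ2 p • fderiv ℝ τ2 p + τ2 p • fderiv ℝ τ2 p)) p := by
    have h1 : HasFDerivAt (fun q => τ1 q * τ1 q) (τ1 p • fderiv ℝ τ1 p + τ1 p • fderiv ℝ τ1 p) p :=
      (hτ1d p).hasFDerivAt.mul (hτ1d p).hasFDerivAt
    have h2 : HasFDerivAt (fun q => τ2 q * τ2 q) (τ2 p • fderiv ℝ τ2 p + τ2 p • fderiv ℝ τ2 p) p :=
      (hτ2d p).hasFDerivAt.mul (hτ2d p).hasFDerivAt
    have : (fun q => τ1 q ^ 2 + τ2 q ^ 2) = fun q => τ1 q * τ1 q + τ2 q * τ2 q := by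
      funext q; ring
    rw [this]
    exact h1.add h2
  -- derivative of the norm
  have hg : HasFDerivAt (fun q => Real.sqrt (τ1 q ^ 2 + τ2 q ^ 2))
      ((1 / (2 * Real.sqrt (τ1 p ^ 2 + τ2 p ^ 2))) •
        ((τ1 p • fderiv ℝ τ1 p + τ1 p • fderiv ℝ τ1 p)
          + (τ2 p • fderiv ℝ τ2 p + τ2 p • fderiv ℝ τ2 p))) p := hsq.sqrt hSne
  -- derivative of the inverse norm
  have hginv : HasFDerivAt (fun q => (Real.sqrt (τ1 q ^ 2 + τ2 q ^ 2))⁻¹)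
      ((-((Real.sqrt (τ1 p ^ 2 + τ2 p ^ 2)) ^ 2)⁻¹) •
        ((1 / (2 * Real.sqrt (τ1 p ^ 2 + τ2 p ^ 2))) •
          ((τ1 p • fderiv ℝ τ1 p + τ1 p • fderiv ℝ τ1 p)
            + (τ2 p • fderiv ℝ τ2 p + τ2 p • fderiv ℝ τ2 p)))) p :=
    (hasDerivAt_inv hgne).comp_hasFDerivAt p hg
  -- tb functions as products
  have htb1fun : (fun q => τ1 q / Real.sqrt (τ1 q ^ 2 + τ2 q ^ 2))
      = fun q => τ1 q * (Real.sqrt (τ1 q ^ 2 + τ2 q ^ 2))⁻¹ := by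
    funext q; rw [div_eq_mul_inv]
  have htb2fun : (fun q => τ2 q / Real.sqrt (τ1 q ^ 2 + τ2 q ^ 2))
      = fun q => τ2 q * (Real.sqrt (τ1 q ^ 2 + τ2 q ^ 2))⁻¹ := by
    funext q; rw [div_eq_mul_inv]
  set Ginv : (ℝ × ℝ × ℝ) →L[ℝ] ℝ :=
    ((-((Real.sqrt (τ1 p ^ 2 + τ2 p ^ 2)) ^ 2)⁻¹) •
        ((1 / (2 * Real.sqrt (τ1 p ^ 2 + τ2 p ^ 2))) •
          ((τ1 p • fderiv ℝ τ1 p + τ1 p • fderiv ℝ τ1 p)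
            + (τ2 p • fderiv ℝ τ2 p + τ2 p • fderiv ℝ τ2 p)))) with hGinv
  have htb1' : HasFDerivAt (fun q => τ1 q * (Real.sqrt (τ1 q ^ 2 + τ2 q ^ 2))⁻¹)
      (τ1 p • Ginv + (Real.sqrt (τ1 p ^ 2 + τ2 p ^ 2))⁻¹ • fderiv ℝ τ1 p) p :=
    (hτ1d p).hasFDerivAt.mul hginv
  have htb2' : HasFDerivAt (fun q => τ2 q * (Real.sqrt (τ1 q ^ 2 + τ2 q ^ 2))⁻¹)
      (τ2 p • Ginv + (Real.sqrt (τ1 p ^ 2 + τ2 p ^ 2))⁻¹ • fderiv ℝ τ2 p) p :=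
    (hτ2d p).hasFDerivAt.mul hginv
  -- the full function
  have hFfun : (fun q => (τ1 q / Real.sqrt (τ1 q ^ 2 + τ2 q ^ 2)) * dx1 μ q
        + (τ2 q / Real.sqrt (τ1 q ^ 2 + τ2 q ^ 2)) * dx2 μ q)
      = fun q => (τ1 q * (Real.sqrt (τ1 q ^ 2 + τ2 q ^ 2))⁻¹) * Φ q e1
        + (τ2 q * (Real.sqrt (τ1 q ^ 2 + τ2 q ^ 2))⁻¹) * Φ q e2 := by
    funext q
    rw [hm1fun, hm2fun, div_eq_mul_inv, div_eq_mul_inv]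
  have hF : HasFDerivAt (fun q => (τ1 q * (Real.sqrt (τ1 q ^ 2 + τ2 q ^ 2))⁻¹) * Φ q e1
        + (τ2 q * (Real.sqrt (τ1 q ^ 2 + τ2 q ^ 2))⁻¹) * Φ q e2)
      (((τ1 p * (Real.sqrt (τ1 p ^ 2 + τ2 p ^ 2))⁻¹)
          • ((ContinuousLinearMap.apply ℝ ℝ e1).comp f'')
        + Φ p e1 • (τ1 p • Ginv + (Real.sqrt (τ1 p ^ 2 + τ2 p ^ 2))⁻¹ • fderiv ℝ τ1 p))
       + ((τ2 p * (Real.sqrt (τ1 p ^ 2 + τ2 p ^ 2))⁻¹)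
          • ((ContinuousLinearMap.apply ℝ ℝ e2).comp f'')
        + Φ p e2 • (τ2 p • Ginv + (Real.sqrt (τ1 p ^ 2 + τ2 p ^ 2))⁻¹ • fderiv ℝ τ2 p))) p :=
    (htb1'.mul hm1).add (htb2'.mul hm2)
  -- rewrite the goal's matD via the fderiv
  rw [hFfun, matD_eq hF.differentiableAt, hF.fderiv]
  -- express the τ equations in directional form
  have ha1 : fderiv ℝ τ1 p v = τ1 p * dx1 u1 p + τ2 p * dx2 u1 p := by
    rw [← matD_eq (hτ1d p)]; exact hτeq1 p
  have ha2 : fderiv ℝ τ2 p v = τ1 p * dx1 u2 p + τ2 p * dx2 u2 p := by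
    rw [← matD_eq (hτ2d p)]; exact hτeq2 p
  -- second-derivative values
  have hM1v : ((ContinuousLinearMap.apply ℝ ℝ e1).comp f'') v
      = -(dx1 u1 p * Φ p e1 + dx1 u2 p * Φ p e2) := by
    have h1 : ((ContinuousLinearMap.apply ℝ ℝ e1).comp f'') v = f'' v e1 := rfl
    rw [h1, hsymm v e1, key1, dx1_eq (hu1d p), dx1_eq (hu2d p)]
  have hM2v : ((ContinuousLinearMap.apply ℝ ℝ e2).comp f'') v
      = -(dx2 u1 p * Φ p e1 + dx2 u2 p * Φ p e2) := by
    have h1 : ((ContinuousLinearMap.apply ℝ ℝ e2).comp f'') v = f'' v e2 := rfl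
    rw [h1, hsymm v e2, key2, dx2_eq (hu1d p), dx2_eq (hu2d p)]
  -- expand everything into scalars
  rw [hm1fun, hm2fun]
  rw [← hv]
  simp only [ContinuousLinearMap.add_apply, ContinuousLinearMap.smul_apply, smul_eq_mul,
    hM1v, hM2v, hGinv]
  rw [ha1, ha2]
  set g := Real.sqrt (τ1 p ^ 2 + τ2 p ^ 2) with hgdef
  field_simp
  ring
end

section
/- Let u : ℝ × ℝ² → ℝ² be twice continuously differentiable with ∂₁u₁ + ∂₂u₂ = 0 everywhere, and set u̇ = ∂_tu + (u·∇)u. Then the material derivative of the nonlinear pressure source satisfies pointwise: (∂_t + u·∇)(Σ_{i,j} ∂ᵢuⱼ ∂ⱼuᵢ) = 2 Σ_{i,j} ∂ᵢuⱼ ∂ⱼu̇ᵢ; in the paper's notation, D/Dt(∇u : (∇u)ᵀ) = 2∇u : (∇u̇)ᵀ for divergence-free u in two space dimensions. -/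
lemma contDiff_fdirD {f : ℝ × ℝ × ℝ → ℝ} (hf : ContDiff ℝ 2 f) (w : ℝ × ℝ × ℝ) :
    ContDiff ℝ 1 (fun q => fderiv ℝ f q w) := by
  have h1 : ContDiff ℝ 1 (fderiv ℝ f) := hf.fderiv_right (by norm_num)
  exact (ContinuousLinearMap.apply ℝ ℝ w).contDiff.comp h1

lemma fderiv_fdirD {f : ℝ × ℝ × ℝ → ℝ} (hf : ContDiff ℝ 2 f) (p v w : ℝ × ℝ × ℝ) :
    fderiv ℝ (fun q => fderiv ℝ f q w) p v = fderiv ℝ (fderiv ℝ f) p v w := by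
  have h1 : ContDiff ℝ 1 (fderiv ℝ f) := hf.fderiv_right (by norm_num)
  have := fderiv_clm_apply (h1.differentiable one_ne_zero |>.differentiableAt (x := p))
    (differentiableAt_const w)
  rw [this]
  simp

lemma fdir_symm {f : ℝ × ℝ × ℝ → ℝ} (hf : ContDiff ℝ 2 f) (p v w : ℝ × ℝ × ℝ) :
    fderiv ℝ (fderiv ℝ f) p v w = fderiv ℝ (fderiv ℝ f) p w v := by
  have h1 : ContDiff ℝ 1 (fderiv ℝ f) := hf.fderiv_right (by norm_num)
  exact second_derivative_symmetric
    (fun y => ((hf.differentiable two_ne_zero) y).hasFDerivAt)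
    ((h1.differentiable one_ne_zero p).hasFDerivAt) v w

lemma Dv_add {f g : ℝ × ℝ × ℝ → ℝ} {p : ℝ × ℝ × ℝ} (hf : DifferentiableAt ℝ f p)
    (hg : DifferentiableAt ℝ g p) (v : ℝ × ℝ × ℝ) :
    fderiv ℝ (fun q => f q + g q) p v = fderiv ℝ f p v + fderiv ℝ g p v := by
  rw [fderiv_fun_add hf hg]; rfl

lemma Dv_mul {f g : ℝ × ℝ × ℝ → ℝ} {p : ℝ × ℝ × ℝ} (hf : DifferentiableAt ℝ f p)
    (hg : DifferentiableAt ℝ g p) (v : ℝ × ℝ × ℝ) :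
    fderiv ℝ (fun q => f q * g q) p v = fderiv ℝ f p v * g p + f p * fderiv ℝ g p v := by
  rw [fderiv_fun_mul hf hg]
  simp only [ContinuousLinearMap.add_apply, ContinuousLinearMap.smul_apply, smul_eq_mul]
  ring

/-- For a divergence-free `C²` velocity field `u` on `ℝ²`, with material derivative
`u̇ = ∂ₜu + (u·∇)u`, the material derivative of the nonlinear pressure source satisfies
`D/Dt(∇u : (∇u)ᵀ) = 2∇u : (∇u̇)ᵀ`, i.e.
`(∂ₜ + u·∇)(Σᵢⱼ ∂ᵢuⱼ∂ⱼuᵢ) = 2Σᵢⱼ ∂ᵢuⱼ∂ⱼu̇ᵢ`. -/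
theorem material_derivative_pressure_source
    (u1 u2 : ℝ × ℝ × ℝ → ℝ)
    (hu1 : ContDiff ℝ 2 u1) (hu2 : ContDiff ℝ 2 u2)
    (hdiv : ∀ p : ℝ × ℝ × ℝ, dx1 u1 p + dx2 u2 p = 0)
    (ud1 ud2 : ℝ × ℝ × ℝ → ℝ)
    (hud1 : ud1 = fun p => dt u1 p + (u1 p * dx1 u1 p + u2 p * dx2 u1 p))
    (hud2 : ud2 = fun p => dt u2 p + (u1 p * dx1 u2 p + u2 p * dx2 u2 p))
    (G : ℝ × ℝ × ℝ → ℝ)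
    (hG : G = fun q => dx1 u1 q * dx1 u1 q + dx1 u2 q * dx2 u1 q
      + dx2 u1 q * dx1 u2 q + dx2 u2 q * dx2 u2 q) :
    ∀ p : ℝ × ℝ × ℝ,
      dt G p + u1 p * dx1 G p + u2 p * dx2 G p
      = 2 * (dx1 u1 p * dx1 ud1 p + dx1 u2 p * dx2 ud1 p
          + dx2 u1 p * dx1 ud2 p + dx2 u2 p * dx2 ud2 p) := by
  have hu1d : Differentiable ℝ u1 := hu1.differentiable two_ne_zero
  have hu2d : Differentiable ℝ u2 := hu2.differentiable two_ne_zero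
  have D1 : ∀ w, Differentiable ℝ (fun q => fderiv ℝ u1 q w) :=
    fun w => (contDiff_fdirD hu1 w).differentiable one_ne_zero
  have D2 : ∀ w, Differentiable ℝ (fun q => fderiv ℝ u2 q w) :=
    fun w => (contDiff_fdirD hu2 w).differentiable one_ne_zero
  have hG' : G = fun q => fderiv ℝ u1 q (0, 1, 0) * fderiv ℝ u1 q (0, 1, 0)
      + fderiv ℝ u2 q (0, 1, 0) * fderiv ℝ u1 q (0, 0, 1)
      + fderiv ℝ u1 q (0, 0, 1) * fderiv ℝ u2 q (0, 1, 0)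
      + fderiv ℝ u2 q (0, 0, 1) * fderiv ℝ u2 q (0, 0, 1) := by
    rw [hG]; funext q
    rw [dx1_eq (hu1d q), dx1_eq (hu2d q), dx2_eq (hu1d q), dx2_eq (hu2d q)]
  have hud1' : ud1 = fun q => fderiv ℝ u1 q (1, 0, 0)
      + (u1 q * fderiv ℝ u1 q (0, 1, 0) + u2 q * fderiv ℝ u1 q (0, 0, 1)) := by
    rw [hud1]; funext q
    rw [dt_eq (hu1d q), dx1_eq (hu1d q), dx2_eq (hu1d q)]
  have hud2' : ud2 = fun q => fderiv ℝ u2 q (1, 0, 0)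
      + (u1 q * fderiv ℝ u2 q (0, 1, 0) + u2 q * fderiv ℝ u2 q (0, 0, 1)) := by
    rw [hud2]; funext q
    rw [dt_eq (hu2d q), dx1_eq (hu2d q), dx2_eq (hu2d q)]
  have hGd : Differentiable ℝ G := by
    rw [hG']
    exact ((((D1 (0,1,0)).mul (D1 (0,1,0))).add ((D2 (0,1,0)).mul (D1 (0,0,1)))).add
      ((D1 (0,0,1)).mul (D2 (0,1,0)))).add ((D2 (0,0,1)).mul (D2 (0,0,1)))
  have hud1d : Differentiable ℝ ud1 := by
    rw [hud1']
    exact (D1 (1,0,0)).add ((hu1d.mul (D1 (0,1,0))).add (hu2d.mul (D1 (0,0,1))))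
  have hud2d : Differentiable ℝ ud2 := by
    rw [hud2']
    exact (D2 (1,0,0)).add ((hu1d.mul (D2 (0,1,0))).add (hu2d.mul (D2 (0,0,1))))
  intro p
  have m1 : DifferentiableAt ℝ (fun q => fderiv ℝ u1 q (0,1,0) * fderiv ℝ u1 q (0,1,0)) p :=
    ((D1 (0,1,0)) p).mul ((D1 (0,1,0)) p)
  have m2 : DifferentiableAt ℝ (fun q => fderiv ℝ u2 q (0,1,0) * fderiv ℝ u1 q (0,0,1)) p :=
    ((D2 (0,1,0)) p).mul ((D1 (0,0,1)) p)
  have m3 : DifferentiableAt ℝ (fun q => fderiv ℝ u1 q (0,0,1) * fderiv ℝ u2 q (0,1,0)) p :=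
    ((D1 (0,0,1)) p).mul ((D2 (0,1,0)) p)
  have m4 : DifferentiableAt ℝ (fun q => fderiv ℝ u2 q (0,0,1) * fderiv ℝ u2 q (0,0,1)) p :=
    ((D2 (0,0,1)) p).mul ((D2 (0,0,1)) p)
  have s12 : DifferentiableAt ℝ (fun q => fderiv ℝ u1 q (0,1,0) * fderiv ℝ u1 q (0,1,0)
      + fderiv ℝ u2 q (0,1,0) * fderiv ℝ u1 q (0,0,1)) p := m1.add m2
  have s123 : DifferentiableAt ℝ (fun q => fderiv ℝ u1 q (0,1,0) * fderiv ℝ u1 q (0,1,0)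
      + fderiv ℝ u2 q (0,1,0) * fderiv ℝ u1 q (0,0,1)
      + fderiv ℝ u1 q (0,0,1) * fderiv ℝ u2 q (0,1,0)) p := s12.add m3
  have hfG : ∀ v, fderiv ℝ G p v =
      (fderiv ℝ (fderiv ℝ u1) p v (0,1,0) * fderiv ℝ u1 p (0,1,0)
        + fderiv ℝ u1 p (0,1,0) * fderiv ℝ (fderiv ℝ u1) p v (0,1,0))
      + (fderiv ℝ (fderiv ℝ u2) p v (0,1,0) * fderiv ℝ u1 p (0,0,1)
        + fderiv ℝ u2 p (0,1,0) * fderiv ℝ (fderiv ℝ u1) p v (0,0,1))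
      + (fderiv ℝ (fderiv ℝ u1) p v (0,0,1) * fderiv ℝ u2 p (0,1,0)
        + fderiv ℝ u1 p (0,0,1) * fderiv ℝ (fderiv ℝ u2) p v (0,1,0))
      + (fderiv ℝ (fderiv ℝ u2) p v (0,0,1) * fderiv ℝ u2 p (0,0,1)
        + fderiv ℝ u2 p (0,0,1) * fderiv ℝ (fderiv ℝ u2) p v (0,0,1)) := by
    intro v
    rw [hG']
    rw [Dv_add s123 m4, Dv_add s12 m3, Dv_add m1 m2,
      Dv_mul ((D1 (0,1,0)) p) ((D1 (0,1,0)) p), Dv_mul ((D2 (0,1,0)) p) ((D1 (0,0,1)) p),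
      Dv_mul ((D1 (0,0,1)) p) ((D2 (0,1,0)) p), Dv_mul ((D2 (0,0,1)) p) ((D2 (0,0,1)) p),
      fderiv_fdirD hu1 p v (0,1,0), fderiv_fdirD hu1 p v (0,0,1),
      fderiv_fdirD hu2 p v (0,1,0), fderiv_fdirD hu2 p v (0,0,1)]
  have hfUD : ∀ (f : ℝ × ℝ × ℝ → ℝ), ContDiff ℝ 2 f → ∀ v,
      fderiv ℝ (fun q => fderiv ℝ f q (1, 0, 0)
        + (u1 q * fderiv ℝ f q (0, 1, 0) + u2 q * fderiv ℝ f q (0, 0, 1))) p v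
      = fderiv ℝ (fderiv ℝ f) p v (1,0,0)
        + (fderiv ℝ u1 p v * fderiv ℝ f p (0,1,0) + u1 p * fderiv ℝ (fderiv ℝ f) p v (0,1,0)
          + (fderiv ℝ u2 p v * fderiv ℝ f p (0,0,1) + u2 p * fderiv ℝ (fderiv ℝ f) p v (0,0,1))) := by
    intro f hf v
    have df : ∀ w, DifferentiableAt ℝ (fun q => fderiv ℝ f q w) p :=
      fun w => ((contDiff_fdirD hf w).differentiable one_ne_zero) p
    have n1 : DifferentiableAt ℝ (fun q => u1 q * fderiv ℝ f q (0,1,0)) p :=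
      (hu1d p).mul (df (0,1,0))
    have n2 : DifferentiableAt ℝ (fun q => u2 q * fderiv ℝ f q (0,0,1)) p :=
      (hu2d p).mul (df (0,0,1))
    rw [Dv_add (df (1,0,0)) (show DifferentiableAt ℝ (fun q => u1 q * fderiv ℝ f q (0,1,0) + u2 q * fderiv ℝ f q (0,0,1)) p from n1.add n2), Dv_add n1 n2,
      Dv_mul (hu1d p) (df (0,1,0)), Dv_mul (hu2d p) (df (0,0,1)),
      fderiv_fdirD hf p v (1,0,0), fderiv_fdirD hf p v (0,1,0), fderiv_fdirD hf p v (0,0,1)]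
  rw [dt_eq (hGd p), dx1_eq (hGd p), dx2_eq (hGd p),
    dx1_eq (hud1d p), dx2_eq (hud1d p), dx1_eq (hud2d p), dx2_eq (hud2d p),
    dx1_eq (hu1d p), dx2_eq (hu1d p), dx1_eq (hu2d p), dx2_eq (hu2d p)]
  rw [hud1', hud2']
  rw [hfG (1,0,0), hfG (0,1,0), hfG (0,0,1),
    hfUD u1 hu1 (0,1,0), hfUD u1 hu1 (0,0,1), hfUD u2 hu2 (0,1,0), hfUD u2 hu2 (0,0,1)]
  rw [fdir_symm hu1 p (0,1,0) (1,0,0), fdir_symm hu1 p (0,0,1) (1,0,0),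
    fdir_symm hu1 p (0,0,1) (0,1,0), fdir_symm hu2 p (0,1,0) (1,0,0),
    fdir_symm hu2 p (0,0,1) (1,0,0), fdir_symm hu2 p (0,0,1) (0,1,0)]
  have hd : fderiv ℝ u1 p (0, 1, 0) + fderiv ℝ u2 p (0, 0, 1) = 0 := by
    have := hdiv p
    rwa [dx1_eq (hu1d p), dx2_eq (hu2d p)] at this
  have h22 : fderiv ℝ u2 p ((0 : ℝ), (0 : ℝ), (1 : ℝ)) = - fderiv ℝ u1 p ((0 : ℝ), (1 : ℝ), (0 : ℝ)) := by
    linarith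
  rw [h22]
  ring
end
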